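/- arXiv:2101.04555 — 2 statements merged into one kernel-verified Lean document; each statement's English description precedes it below -/
import Mathlib

section
/- (Hahn–Banach extension in linear n-normed spaces) Let X be a separable real linear n-normed space, W a subspace of X, and T_W a bounded b-linear functional on W × ⟨b₂⟩ × ⋯ × ⟨bₙ⟩. Then there exists a bounded b-linear functional T on X × ⟨b₂⟩ × ⋯ × ⟨bₙ⟩ such that T(x, b₂,…,bₙ) = T_W(x, b₂,…,bₙ) for all x ∈ W and ‖T‖ = ‖T_W‖. -/
noncomputable section
open Filter Topology

/-- A linear `n+1`-normed space over `𝕜` (real or complex): an `(n+1)`-norm on `X`. -/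
structure NNormSp (n : ℕ) (𝕜 : Type*) (X : Type*) [RCLike 𝕜] [AddCommGroup X] [Module 𝕜 X] where
  N : (Fin (n + 1) → X) → ℝ
  eq_zero_iff : ∀ v : Fin (n + 1) → X, N v = 0 ↔ ¬ LinearIndependent 𝕜 v
  perm_invariant : ∀ (v : Fin (n + 1) → X) (σ : Equiv.Perm (Fin (n + 1))), N (v ∘ σ) = N v
  smul_first : ∀ (α : 𝕜) (x : X) (a : Fin n → X), N (Fin.cons (α • x) a) = ‖α‖ * N (Fin.cons x a)
  add_first : ∀ (x y : X) (a : Fin n → X),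
    N (Fin.cons (x + y) a) ≤ N (Fin.cons x a) + N (Fin.cons y a)

namespace NNormSp

variable {n : ℕ} {𝕜 X : Type*} [RCLike 𝕜] [AddCommGroup X] [Module 𝕜 X]

/-- Convergence of a sequence in a linear n-normed space. -/
def TendstoSeq (S : NNormSp n 𝕜 X) (x : ℕ → X) (l : X) : Prop :=
  ∀ a : Fin n → X, Tendsto (fun k => S.N (Fin.cons (x k - l) a)) atTop (𝓝 0)

/-- Cauchy sequence in a linear n-normed space. -/
def CauchySeqN (S : NNormSp n 𝕜 X) (x : ℕ → X) : Prop :=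
  ∀ a : Fin n → X, Tendsto (fun p : ℕ × ℕ => S.N (Fin.cons (x p.1 - x p.2) a)) atTop (𝓝 0)

/-- An n-Banach space: every Cauchy sequence converges. -/
def Complete (S : NNormSp n 𝕜 X) : Prop :=
  ∀ x : ℕ → X, S.CauchySeqN x → ∃ l, S.TendstoSeq x l

/-- Boundedness of a b-linear functional with respect to the fixed tuple `b`. -/
def IsBounded (S : NNormSp n 𝕜 X) (b : Fin n → X) (T : X → 𝕜) : Prop :=
  ∃ M > (0 : ℝ), ∀ x : X, ‖T x‖ ≤ M * S.N (Fin.cons x b)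

/-- The norm of a bounded b-linear functional. -/
def opNorm (S : NNormSp n 𝕜 X) (b : Fin n → X) (T : X → 𝕜) : ℝ :=
  sInf {M : ℝ | 0 < M ∧ ∀ x : X, ‖T x‖ ≤ M * S.N (Fin.cons x b)}

/-- Continuity of a functional at a point, in the open-ball sense. -/
def ContAt (S : NNormSp n 𝕜 X) (T : X → 𝕜) (x₀ : X) : Prop :=
  ∀ ε > (0 : ℝ), ∃ (e : Fin n → X) (δ : ℝ), 0 < δ ∧
    ∀ x : X, S.N (Fin.cons (x - x₀) e) < δ → ‖T x - T x₀‖ < ε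

end NNormSp

/-- A b-linear functional: additive and homogeneous in its first argument. -/
def IsBLinear {𝕜 X : Type*} [RCLike 𝕜] [AddCommGroup X] [Module 𝕜 X] (T : X → 𝕜) : Prop :=
  (∀ x y : X, T (x + y) = T x + T y) ∧ ∀ (c : 𝕜) (x : X), T (c • x) = c * T x

/-!
For fixed `b`, the map `x ↦ ‖x, b₂, …, bₙ‖` is a seminorm on `X`. With `I` the infimum of the
bound constants of `T_W`, the functional `T_W` is dominated by the seminorm `I ‖·, b‖`, so the
seminorm form of the Hahn–Banach theorem extends it to `T` with `|T x| ≤ I ‖x, b‖`. Hence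
`‖T‖ ≤ I`, and `‖T‖ ≥ I` because every bound for `T` is a bound for its restriction `T_W`.
-/

namespace NNormSp

variable {n : ℕ} {𝕜 X : Type*} [RCLike 𝕜] [AddCommGroup X] [Module 𝕜 X]

def seminorm (S : NNormSp n 𝕜 X) (b : Fin n → X) : Seminorm 𝕜 X :=
  Seminorm.of (fun x => S.N (Fin.cons x b)) (fun x y => S.add_first x y b)
    (fun a x => S.smul_first a x b)

end NNormSp

section DominatingConstants

variable {α : Type*} {u q : α → ℝ}

def dominatingConstants (u q : α → ℝ) : Set ℝ :=
  {M | 0 < M ∧ ∀ x, u x ≤ M * q x}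

theorem bddBelow_dominatingConstants : BddBelow (dominatingConstants u q) :=
  ⟨0, fun _ hM => hM.1.le⟩

theorem add_mem_dominatingConstants (hq : ∀ x, 0 ≤ q x) {I ε : ℝ} (hI : 0 ≤ I) (hε : 0 < ε)
    (h : ∀ x, u x ≤ I * q x) : I + ε ∈ dominatingConstants u q :=
  ⟨by positivity, fun x => (h x).trans (by nlinarith [hq x])⟩

theorem le_sInf_dominatingConstants_mul (hq : ∀ x, 0 ≤ q x)
    (hne : (dominatingConstants u q).Nonempty) (x : α) :
    u x ≤ sInf (dominatingConstants u q) * q x := by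
  obtain ⟨M, hM⟩ := hne
  rcases (hq x).eq_or_lt with hx | hx
  · simpa [← hx] using hM.2 x
  · rw [← div_le_iff₀ hx]
    exact le_csInf ⟨M, hM⟩ fun M' hM' => (div_le_iff₀ hx).2 (hM'.2 x)

theorem sInf_dominatingConstants_le (hq : ∀ x, 0 ≤ q x) {I : ℝ} (hI : 0 ≤ I)
    (h : ∀ x, u x ≤ I * q x) : sInf (dominatingConstants u q) ≤ I :=
  le_of_forall_pos_le_add fun _ hε =>
    csInf_le bddBelow_dominatingConstants (add_mem_dominatingConstants hq hI hε h)

theorem sInf_dominatingConstants_le_comp {β : Type*} (f : β → α)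
    (hne : (dominatingConstants u q).Nonempty) :
    sInf (dominatingConstants (u ∘ f) (q ∘ f)) ≤ sInf (dominatingConstants u q) :=
  csInf_le_csInf bddBelow_dominatingConstants hne fun _ hM => ⟨hM.1, fun x => hM.2 (f x)⟩

end DominatingConstants

theorem hahn_banach_extension_general
    {n : ℕ} {X : Type*} [AddCommGroup X] [Module ℝ X]
    (S : NNormSp n ℝ X)
    (b : Fin n → X) (W : Submodule ℝ X) (TW : W → ℝ)
    (hlin : (∀ x y : W, TW (x + y) = TW x + TW y) ∧
      ∀ (c : ℝ) (x : W), TW (c • x) = c * TW x)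
    (hbd : ∃ M > (0 : ℝ), ∀ x : W, ‖TW x‖ ≤ M * S.N (Fin.cons (x : X) b)) :
    ∃ T : X → ℝ, IsBLinear T ∧ S.IsBounded b T ∧
      (∀ x : W, T (x : X) = TW x) ∧
      S.opNorm b T =
        sInf {M : ℝ | 0 < M ∧ ∀ x : W, ‖TW x‖ ≤ M * S.N (Fin.cons (x : X) b)} := by
  set I := sInf {M : ℝ | 0 < M ∧ ∀ x : W, ‖TW x‖ ≤ M * S.N (Fin.cons (x : X) b)}
  have hq : ∀ x, 0 ≤ S.seminorm b x := apply_nonneg _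
  have hI : 0 ≤ I := le_csInf hbd fun _ hM => hM.1.le
  have hTW : ∀ x : W, ‖TW x‖ ≤ I * S.seminorm b x :=
    le_sInf_dominatingConstants_mul (fun x => hq x) hbd
  let g : Module.Dual ℝ W := ⟨⟨TW, hlin.1⟩, hlin.2⟩
  obtain ⟨T, hext, hT⟩ := Module.Dual.exists_extension_of_le_seminorm_real W g
    (p := I.toNNReal • S.seminorm b) fun x => show TW x ≤ _ by
      simpa [NNReal.smul_def, Real.coe_toNNReal _ hI] using (le_abs_self _).trans (hTW x)
  have hT : ∀ x, ‖T x‖ ≤ I * S.seminorm b x := by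
    simpa [NNReal.smul_def, Real.coe_toNNReal _ hI] using hT
  have hTbd : I + 1 ∈ dominatingConstants (fun x => ‖T x‖) (S.seminorm b) :=
    add_mem_dominatingConstants hq hI one_pos hT
  refine ⟨T, ⟨map_add T, map_smul T⟩, ⟨I + 1, hTbd⟩, hext,
    le_antisymm (sInf_dominatingConstants_le hq hI hT) ?_⟩
  obtain rfl : TW = fun x : W => T x := funext fun x => (hext x).symm
  exact sInf_dominatingConstants_le_comp Subtype.val ⟨I + 1, hTbd⟩

theorem hahn_banach_extension
    {n : ℕ} {X : Type*} [AddCommGroup X] [Module ℝ X]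
    (S : NNormSp n ℝ X)
    (hsep : ∃ D : Set X, D.Countable ∧
      ∀ x : X, ∃ y : ℕ → X, (∀ k, y k ∈ D) ∧ S.TendstoSeq y x)
    (b : Fin n → X) (W : Submodule ℝ X) (TW : W → ℝ)
    (hlin : (∀ x y : W, TW (x + y) = TW x + TW y) ∧
      ∀ (c : ℝ) (x : W), TW (c • x) = c * TW x)
    (hbd : ∃ M > (0 : ℝ), ∀ x : W, ‖TW x‖ ≤ M * S.N (Fin.cons (x : X) b)) :
    ∃ T : X → ℝ, IsBLinear T ∧ S.IsBounded b T ∧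
      (∀ x : W, T (x : X) = TW x) ∧
      S.opNorm b T =
        sInf {M : ℝ | 0 < M ∧ ∀ x : W, ‖TW x‖ ≤ M * S.N (Fin.cons (x : X) b)} :=
  hahn_banach_extension_general S b W TW hlin hbd
end
end

section
/- Let X be a real linear n-normed space and x₀ a nonzero element of X with ‖x₀, b₂,…,bₙ‖ ≠ 0. Then there exists a bounded b-linear functional T on X × ⟨b₂⟩ × ⋯ × ⟨bₙ⟩ with ‖T‖ = 1 and T(x₀, b₂,…,bₙ) = ‖x₀, b₂,…,bₙ‖. -/
noncomputable section
open Filter Topology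

/-! The map `x ↦ ‖x, b₂, …, bₙ‖` is a seminorm on `X`. Hahn–Banach extends the functional
`c • x₀ ↦ c ‖x₀, b₂, …, bₙ‖` from the span of `x₀` to a functional dominated by this
seminorm; dominated means bounded with constant `1`, and the value at `x₀` shows that no smaller
constant works. -/

open Module

namespace Seminorm

variable {𝕜 E : Type*} [RCLike 𝕜] [AddCommGroup E] [Module 𝕜 E]

theorem exists_dual_norm_le_eq (p : Seminorm 𝕜 E) (x₀ : E) :
    ∃ g : Dual 𝕜 E, (∀ x, ‖g x‖ ≤ p x) ∧ g x₀ = p x₀ := by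
  have hker : ∀ c : 𝕜, c • x₀ = 0 → c • (p x₀ : 𝕜) = 0 := by
    intro c hc
    have : ‖c‖ * p x₀ = 0 := by rw [← map_smul_eq_mul, hc, map_zero]
    rw [← norm_eq_zero, smul_eq_mul, norm_mul, RCLike.norm_of_nonneg (apply_nonneg p x₀), this]
  let f : E →ₗ.[𝕜] 𝕜 := LinearPMap.mkSpanSingleton' x₀ (p x₀ : 𝕜) hker
  have hdom : f.domain = 𝕜 ∙ x₀ := LinearPMap.domain_mkSpanSingleton (σ := RingHom.id 𝕜) _ _ hker
  have hf : ∀ x : f.domain, ‖f x‖ ≤ p x := by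
    rintro ⟨x, hx⟩
    obtain ⟨c, rfl⟩ := Submodule.mem_span_singleton.mp (hdom ▸ hx)
    rw [LinearPMap.mkSpanSingleton'_apply, map_smul_eq_mul, smul_eq_mul, norm_mul,
      RCLike.norm_of_nonneg (apply_nonneg p x₀)]
    exact le_rfl
  obtain ⟨g, hgf, hgp⟩ := Dual.exists_extension_of_le_seminorm f.domain f.toFun hf
  have hx₀ : x₀ ∈ f.domain := hdom ▸ Submodule.mem_span_singleton_self x₀
  exact ⟨g, hgp, (hgf ⟨x₀, hx₀⟩).trans (LinearPMap.mkSpanSingleton'_apply_self _ _ hker hx₀)⟩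

end Seminorm

theorem LinearMap.isBLinear {𝕜 X : Type*} [RCLike 𝕜] [AddCommGroup X] [Module 𝕜 X]
    (g : X →ₗ[𝕜] 𝕜) : IsBLinear g :=
  ⟨map_add g, map_smul g⟩

namespace NNormSp

variable {n : ℕ} {𝕜 X : Type*} [RCLike 𝕜] [AddCommGroup X] [Module 𝕜 X]
  (S : NNormSp n 𝕜 X) (b : Fin n → X)

def toSeminorm : Seminorm 𝕜 X :=
  Seminorm.of (fun x => S.N (Fin.cons x b)) (fun x y => S.add_first x y b)
    (fun c x => S.smul_first c x b)

@[simp]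
theorem toSeminorm_apply (x : X) : S.toSeminorm b x = S.N (Fin.cons x b) := rfl

variable {S b} {T : X → 𝕜}

theorem isBounded_of_norm_le (hT : ∀ x, ‖T x‖ ≤ S.N (Fin.cons x b)) : S.IsBounded b T :=
  ⟨1, one_pos, fun x => (one_mul (S.N (Fin.cons x b))).symm ▸ hT x⟩

theorem opNorm_eq_one_of_norm_le_of_norm_eq {x₀ : X} (hT : ∀ x, ‖T x‖ ≤ S.N (Fin.cons x b))
    (hTx₀ : ‖T x₀‖ = S.N (Fin.cons x₀ b)) (hN : S.N (Fin.cons x₀ b) ≠ 0) :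
    S.opNorm b T = 1 := by
  have hpos : 0 < S.N (Fin.cons x₀ b) := (apply_nonneg (S.toSeminorm b) x₀).lt_of_ne' hN
  have hbounds : {M : ℝ | 0 < M ∧ ∀ x, ‖T x‖ ≤ M * S.N (Fin.cons x b)} = Set.Ici 1 := by
    ext M
    refine ⟨fun ⟨_, hM⟩ => ?_, fun hM => ⟨one_pos.trans_le hM, fun x => ?_⟩⟩
    · have := hM x₀
      rw [hTx₀] at this
      exact (le_mul_iff_one_le_left hpos).mp this
    · exact (hT x).trans (le_mul_of_one_le_left (apply_nonneg (S.toSeminorm b) x) hM)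
  rw [opNorm, hbounds, csInf_Ici]

end NNormSp

theorem norming_functional_exists_general
    {n : ℕ} {X : Type*} [AddCommGroup X] [Module ℝ X]
    (S : NNormSp n ℝ X) (b : Fin n → X) (x₀ : X)
    (hN : S.N (Fin.cons x₀ b) ≠ 0) :
    ∃ T : X → ℝ, IsBLinear T ∧ S.IsBounded b T ∧
      S.opNorm b T = 1 ∧ T x₀ = S.N (Fin.cons x₀ b) := by
  obtain ⟨g, hle, hgx₀⟩ := (S.toSeminorm b).exists_dual_norm_le_eq x₀
  simp only [NNormSp.toSeminorm_apply] at hle hgx₀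
  have hnorm : ‖g x₀‖ = S.N (Fin.cons x₀ b) := by
    rw [hgx₀]
    exact RCLike.norm_of_nonneg (apply_nonneg (S.toSeminorm b) x₀)
  exact ⟨g, g.isBLinear, NNormSp.isBounded_of_norm_le hle,
    NNormSp.opNorm_eq_one_of_norm_le_of_norm_eq hle hnorm hN, hgx₀⟩

theorem norming_functional_exists
    {n : ℕ} {X : Type*} [AddCommGroup X] [Module ℝ X]
    (S : NNormSp n ℝ X) (b : Fin n → X) (x₀ : X) (hx₀ : x₀ ≠ 0)
    (hN : S.N (Fin.cons x₀ b) ≠ 0) :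
    ∃ T : X → ℝ, IsBLinear T ∧ S.IsBounded b T ∧
      S.opNorm b T = 1 ∧ T x₀ = S.N (Fin.cons x₀ b) :=
  norming_functional_exists_general S b x₀ hN
end
end
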